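/- Scalable (coordinate-wise) version of the PI optimality theorem: suppose for each coordinate k ∈ Fin n we have a connected simple graph G_k on a nonempty finite vertex type V_k with Laplacian L_k, and a matrix D_k : Matrix V_k E_k ℝ with D_k * D_kᵀ = L_k. Let f : (Π k, (V_k → ℝ)) → ℝ be convex and differentiable, with gradient ∇f. If z* : Π k, (V_k → ℝ) and μ* : Π k, (E_k → ℝ) satisfy, for every k, k_G · (∇f(z*)) k + k_P · (L_k *ᵥ z* k) + k_I' · (D_k *ᵥ μ* k) = 0 and D_kᵀ *ᵥ z* k = 0, then each z* k is a constant function on V_k, and f(z*) ≤ f(z) for every z : Π k, (V_k → ℝ) such that each z k is a constant function on V_k. -/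

import Mathlib

open Matrix

/-! Since `D Dᵀ = L`, the kernel of `Dᵀ` is the kernel of the Laplacian, i.e. the constant
vectors of the connected graph. Hence `z*` is constant, and for constant `z` the stationarity
equation gives `k_G ⟨∇f(z*), z - z*⟩ = -k_I ⟨μ*, Dᵀ (z - z*)⟩ = 0`. The first-order
characterisation of convexity then yields `f(z*) ≤ f(z)`. -/

theorem ConvexOn.add_fderiv_sub_le {E : Type*} [NormedAddCommGroup E] [NormedSpace ℝ E]
    {s : Set E} {f : E → ℝ} {f' : E →L[ℝ] ℝ} {x y : E}
    (hf : ConvexOn ℝ s f) (hx : x ∈ s) (hy : y ∈ s) (hf' : HasFDerivAt f f' x) :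
    f x + f' (y - x) ≤ f y := by
  set g : ℝ → ℝ := f ∘ AffineMap.lineMap x y
  have hg : ConvexOn ℝ (Set.Icc 0 1) g :=
    (hf.comp_affineMap _).subset (fun _ ht => hf.1.lineMap_mem hx hy ht) (convex_Icc 0 1)
  have hg' : HasDerivAt g (f' (y - x)) 0 :=
    (by simpa using hf' : HasFDerivAt f f' (AffineMap.lineMap x y (0 : ℝ))).comp_hasDerivAt 0
      AffineMap.hasDerivAt_lineMap
  have := hg.le_slope_of_hasDerivAt (Set.left_mem_Icc.2 zero_le_one)
    (Set.right_mem_Icc.2 zero_le_one) one_pos hg'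
  simp only [slope_def_field, g, Function.comp_apply, AffineMap.lineMap_apply_zero,
    AffineMap.lineMap_apply_one, sub_zero, div_one] at this
  linarith

theorem SimpleGraph.Connected.lapMatrix_mulVec_eq_zero_iff {V : Type*} [Fintype V]
    [DecidableEq V] {G : SimpleGraph V} [DecidableRel G.Adj] (hG : G.Connected) {x : V → ℝ} :
    G.lapMatrix ℝ *ᵥ x = 0 ↔ ∀ i j, x i = x j := by
  rw [lapMatrix_mulVec_eq_zero_iff_forall_reachable]
  exact ⟨fun h i j => h i j (hG.preconnected i j), fun h i j _ => h i j⟩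

theorem SimpleGraph.Connected.transpose_mulVec_eq_zero_iff {V W : Type*} [Fintype V]
    [Fintype W] [DecidableEq V] {G : SimpleGraph V} [DecidableRel G.Adj] (hG : G.Connected)
    {D : Matrix V W ℝ} (hD : D * Dᵀ = G.lapMatrix ℝ) {x : V → ℝ} :
    Dᵀ *ᵥ x = 0 ↔ ∀ i j, x i = x j := by
  rw [← hG.lapMatrix_mulVec_eq_zero_iff, ← hD]
  simpa using (self_mul_conjTranspose_mulVec_eq_zero D x).symm

theorem dotProduct_eq_zero_of_stationary {V W : Type*} [Fintype V] [Fintype W]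
    {L : Matrix V V ℝ} {D : Matrix V W ℝ} {g x w : V → ℝ} {μ : W → ℝ} {kG kP kI : ℝ}
    (hkG : kG ≠ 0) (hstat : (fun i => kG * g i + kP * (L *ᵥ x) i + kI * (D *ᵥ μ) i) = 0)
    (hLx : L *ᵥ x = 0) (hw : Dᵀ *ᵥ w = 0) :
    g ⬝ᵥ w = 0 := by
  have hg : kG • g = -kI • (D *ᵥ μ) := by
    ext i
    have := congrFun hstat i
    simp only [hLx, Pi.zero_apply, mul_zero, add_zero] at this
    simp only [Pi.smul_apply, smul_eq_mul, neg_mul]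
    linarith
  have hDμ : (D *ᵥ μ) ⬝ᵥ w = 0 := by
    rw [dotProduct_comm, dotProduct_mulVec, ← mulVec_transpose, hw, zero_dotProduct]
  have : kG * (g ⬝ᵥ w) = 0 := by
    rw [← smul_eq_mul, ← smul_dotProduct, hg, smul_dotProduct, hDμ, smul_zero]
  exact (mul_eq_zero.1 this).resolve_left hkG

theorem scalable_pi_equilibrium_is_global_min_general
    (n : ℕ)
    (V : Fin n → Type*) (E : Fin n → Type*)
    [∀ k, Fintype (V k)] [∀ k, Fintype (E k)]
    [∀ k, DecidableEq (V k)]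
    (G : ∀ k, SimpleGraph (V k)) [∀ k, DecidableRel (G k).Adj]
    (hG : ∀ k, (G k).Connected)
    (D : ∀ k, Matrix (V k) (E k) ℝ)
    (hD : ∀ k, D k * (D k)ᵀ = (G k).lapMatrix ℝ)
    (f : (∀ k, V k → ℝ) → ℝ)
    (hconv : ConvexOn ℝ Set.univ f) (hdiff : Differentiable ℝ f)
    (gradf : (∀ k, V k → ℝ) → (∀ k, V k → ℝ))
    (hgrad : ∀ x u, fderiv ℝ f x u = ∑ k, ∑ i, gradf x k i * u k i)
    (kG kP kI : ℝ) (hkG : 0 < kG)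
    (zs : ∀ k, V k → ℝ) (μs : ∀ k, E k → ℝ)
    (hstat : ∀ k, (fun i => kG * gradf zs k i
      + kP * ((G k).lapMatrix ℝ *ᵥ zs k) i + kI * (D k *ᵥ μs k) i)
      = (0 : V k → ℝ))
    (hcons : ∀ k, (D k)ᵀ *ᵥ zs k = 0) :
    (∀ k, ∀ i j, zs k i = zs k j) ∧
    ∀ z : ∀ k, V k → ℝ, (∀ k, ∀ i j, z k i = z k j) → f zs ≤ f z := by
  have hker : ∀ k (x : V k → ℝ), (D k)ᵀ *ᵥ x = 0 ↔ ∀ i j, x i = x j := fun k _ =>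
    (hG k).transpose_mulVec_eq_zero_iff (hD k)
  refine ⟨fun k => (hker k (zs k)).1 (hcons k), fun z hz => ?_⟩
  have hLzs : ∀ k, (G k).lapMatrix ℝ *ᵥ zs k = 0 := fun k => by
    rw [← hD k, ← mulVec_mulVec, hcons k, mulVec_zero]
  have hderiv : fderiv ℝ f zs (z - zs) = 0 := by
    rw [hgrad]
    refine Finset.sum_eq_zero fun k _ => dotProduct_eq_zero_of_stationary hkG.ne' (hstat k)
      (hLzs k) ?_
    rw [Pi.sub_apply, mulVec_sub, (hker k (z k)).2 (hz k), hcons k, sub_zero]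
  simpa [hderiv] using hconv.add_fderiv_sub_le (y := z) trivial trivial (hdiff zs).hasFDerivAt

/-- Scalable (coordinate-wise) version of the PI optimality theorem:
for each coordinate `k` there is a connected simple graph `G k` on a nonempty finite
vertex type `V k` with Laplacian `L k` and a matrix `D k` with `D k * (D k)ᵀ = L k`.
If `z*` and `μ*` satisfy, for every `k`,
`k_G · (∇f(z*)) k + k_P · (L k *ᵥ z* k) + k_I' · (D k *ᵥ μ* k) = 0` and
`(D k)ᵀ *ᵥ z* k = 0`, then each `z* k` is constant on `V k` and `f(z*) ≤ f(z)` for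
every `z` with each `z k` constant on `V k`. -/
theorem scalable_pi_equilibrium_is_global_min
    (n : ℕ) (hn : 1 ≤ n)
    (V : Fin n → Type*) (E : Fin n → Type*)
    [∀ k, Fintype (V k)] [∀ k, Fintype (E k)]
    [∀ k, Nonempty (V k)] [∀ k, Nonempty (E k)] [∀ k, DecidableEq (V k)]
    (G : ∀ k, SimpleGraph (V k)) [∀ k, DecidableRel (G k).Adj]
    (hG : ∀ k, (G k).Connected)
    (D : ∀ k, Matrix (V k) (E k) ℝ)
    (hD : ∀ k, D k * (D k)ᵀ = (G k).lapMatrix ℝ)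
    (f : (∀ k, V k → ℝ) → ℝ)
    (hconv : ConvexOn ℝ Set.univ f) (hdiff : Differentiable ℝ f)
    (gradf : (∀ k, V k → ℝ) → (∀ k, V k → ℝ))
    (hgrad : ∀ x u, fderiv ℝ f x u = ∑ k, ∑ i, gradf x k i * u k i)
    (kG kP kI : ℝ) (hkG : 0 < kG) (hkP : 0 < kP) (hkI : 0 < kI)
    (zs : ∀ k, V k → ℝ) (μs : ∀ k, E k → ℝ)
    (hstat : ∀ k, (fun i => kG * gradf zs k i
      + kP * ((G k).lapMatrix ℝ *ᵥ zs k) i + kI * (D k *ᵥ μs k) i)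
      = (0 : V k → ℝ))
    (hcons : ∀ k, (D k)ᵀ *ᵥ zs k = 0) :
    (∀ k, ∀ i j, zs k i = zs k j) ∧
    ∀ z : ∀ k, V k → ℝ, (∀ k, ∀ i j, z k i = z k j) → f zs ≤ f z :=
  scalable_pi_equilibrium_is_global_min_general n V E G hG D hD f hconv hdiff gradf hgrad kG kP kI
    hkG zs μs hstat hcons
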